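/- arXiv:math-ph/0304012 — 10 statements merged into one kernel-verified Lean document; each statement's English description precedes it below -/
import Mathlib

section
/- For Ω ∈ D = span{e_i ∧ e_n : i ≤ n-1} with diagonal mass tensor I = diag(I_1,...,I_n), the bracket [J(Ω), Ω] lies in so(n-1), i.e., its projection onto D vanishes. Consequently the constrained Euler–Poincaré–Suslov equations on D with potential V reduce to (I_i+I_n) dΩ_{in}/dt = (∂V/∂Γ_i)Γ_n − Γ_i(∂V/∂Γ_n). -/
open Matrix

/-- For `Ω ∈ D = span{e_i ∧ e_n}` and diagonal mass tensor, the bracket `[J(Ω),Ω]`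
lies in `so(n-1)` (its last row and column vanish, i.e. its projection to `D` is zero);
consequently the constrained Euler–Poincaré–Suslov equations on `D` reduce to
`(I_i + I_n) Ω̇_{in} = (∂V/∂Γ_i) Γ_n − Γ_i (∂V/∂Γ_n)`. -/
theorem bracket_in_soNminusOne_and_reduction (n : ℕ) (Iv : Fin (n + 1) → ℝ)
    (hIv : ∀ i, 0 < Iv i)
    (Ω Ω' : Matrix (Fin (n + 1)) (Fin (n + 1)) ℝ)
    (hskew : Ωᵀ = -Ω)
    (hΩD : ∀ i j, i ≠ Fin.last n → j ≠ Fin.last n → Ω i j = 0)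
    (hskew' : Ω'ᵀ = -Ω')
    (hΩ'D : ∀ i j, i ≠ Fin.last n → j ≠ Fin.last n → Ω' i j = 0)
    (g Γ : Fin (n + 1) → ℝ)
    (JΩ Br : Matrix (Fin (n + 1)) (Fin (n + 1)) ℝ)
    (hJ : JΩ = Matrix.diagonal Iv * Ω + Ω * Matrix.diagonal Iv)
    (hBr : Br = JΩ * Ω - Ω * JΩ)
    -- the Suslov equation `J(Ω̇) = pr_D([J(Ω),Ω] + (∂V/∂Γ) ∧ Γ)` at one instant,
    -- where `Ω'` stands for `Ω̇` and `g` for the gradient `∂V/∂Γ`: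
    (hSuslov : ∀ i j, (Matrix.diagonal Iv * Ω' + Ω' * Matrix.diagonal Iv) i j =
      if i ≠ Fin.last n ∧ j ≠ Fin.last n then 0
      else Br i j + (g i * Γ j - Γ i * g j)) :
    (∀ i, Br i (Fin.last n) = 0 ∧ Br (Fin.last n) i = 0) ∧
    (∀ i, i ≠ Fin.last n →
      (Iv i + Iv (Fin.last n)) * Ω' i (Fin.last n) =
        g i * Γ (Fin.last n) - Γ i * g (Fin.last n)) := by
  have hdiag : ∀ i, Ω i i = 0 := by
    intro i
    have := congrFun (congrFun hskew i) i
    simp [Matrix.transpose_apply] at this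
    linarith
  have hJ' : ∀ i j, JΩ i j = (Iv i + Iv j) * Ω i j := by
    intro i j
    simp [hJ, Matrix.add_apply, Matrix.diagonal_mul, Matrix.mul_diagonal]
    ring
  have hBr' : ∀ i j, Br i j = ∑ k, (Iv i - Iv j) * (Ω i k * Ω k j) := by
    intro i j
    simp only [hBr, Matrix.sub_apply, Matrix.mul_apply, hJ']
    rw [← Finset.sum_sub_distrib]
    apply Finset.sum_congr rfl
    intro k _
    ring
  have hcol : ∀ i, Br i (Fin.last n) = 0 := by
    intro i
    rw [hBr']
    apply Finset.sum_eq_zero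
    intro k _
    by_cases hk : k = Fin.last n
    · simp [hk, hdiag]
    · by_cases hi : i = Fin.last n
      · simp [hi]
      · rw [hΩD i k hi hk]; ring
  have hrow : ∀ i, Br (Fin.last n) i = 0 := by
    intro i
    rw [hBr']
    apply Finset.sum_eq_zero
    intro k _
    by_cases hk : k = Fin.last n
    · simp [hk, hdiag]
    · by_cases hi : i = Fin.last n
      · simp [hi]
      · rw [hΩD k i hk hi]; ring
  refine ⟨fun i => ⟨hcol i, hrow i⟩, ?_⟩
  intro i hi
  have h := hSuslov i (Fin.last n)
  simp only [Matrix.add_apply, Matrix.diagonal_mul, Matrix.mul_diagonal] at h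
  rw [if_neg (by simp)] at h
  rw [hcol i] at h
  linarith [h]
end

section
/- For the multidimensional Kharlamova system (potential V = Σ_{i=1}^{n-1} B_i Γ_i with B_i ≠ 0), the functions F_{i,j}(Ω) = ((I_i+I_n)/B_i)Ω_{in} − ((I_j+I_n)/B_j)Ω_{jn} are first integrals for all i, j = 1,...,n-1. -/
/-! Rescaling the first equation of the system by `(I_i + I_n) / B_i` gives
`d/dt (((I_i + I_n) / B_i) Ω_{in}) = Γ_n` with a right-hand side independent of `i`,
so the difference of any two such rescaled components has zero derivative and is constant. -/

section

variable {𝕜 : Type*}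

theorem HasDerivAt.div_mul_of_mul_div [NontriviallyNormedField 𝕜] {f : 𝕜 → 𝕜} {a b c x : 𝕜}
    (hf : HasDerivAt f (b * c / a) x) (ha : a ≠ 0) (hb : b ≠ 0) :
    HasDerivAt (fun s => a / b * f s) c x :=
  (hf.const_mul (a / b)).congr_deriv (by field_simp)

theorem sub_eq_sub_of_hasDerivAt_eq [RCLike 𝕜] {E : Type*} [NormedAddCommGroup E]
    [NormedSpace 𝕜 E] {f g f' : 𝕜 → E}
    (hf : ∀ x, HasDerivAt f (f' x) x) (hg : ∀ x, HasDerivAt g (f' x) x) (x y : 𝕜) :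
    f x - g x = f y - g y := by
  have hfg : ∀ x, HasDerivAt (fun s => f s - g s) 0 x := fun x =>
    (sub_self (f' x)) ▸ (hf x).sub (hg x)
  exact is_const_of_deriv_eq_zero (fun x => (hfg x).differentiableAt) (fun x => (hfg x).deriv) x y

end

theorem kharlamova_first_integrals_general (n : ℕ)
    (I : Fin n → ℝ) (In : ℝ) (hI : ∀ i, 0 < I i) (hIn : 0 < In)
    (B : Fin n → ℝ) (hB : ∀ i, B i ≠ 0)
    (Ω : Fin n → ℝ → ℝ) (Γn : ℝ → ℝ)
    (hΩ : ∀ i t, HasDerivAt (Ω i) (B i * Γn t / (I i + In)) t) :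
    ∀ i j t, ((I i + In) / B i) * Ω i t - ((I j + In) / B j) * Ω j t
           = ((I i + In) / B i) * Ω i 0 - ((I j + In) / B j) * Ω j 0 := by
  have hrescaled : ∀ k t, HasDerivAt (fun s => (I k + In) / B k * Ω k s) (Γn t) t :=
    fun k t => (hΩ k t).div_mul_of_mul_div (by linarith [hI k]) (hB k)
  intro i j t
  exact sub_eq_sub_of_hasDerivAt_eq (hrescaled i) (hrescaled j) t 0

/-- For the multidimensional Kharlamova system
`(I_i+I_n) Ω̇_{in} = B_i Γ_n`, `Γ̇_i = −Γ_n Ω_{in}`, `Γ̇_n = Σ Γ_i Ω_{in}`,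
the functions `F_{i,j} = ((I_i+I_n)/B_i) Ω_{in} − ((I_j+I_n)/B_j) Ω_{jn}`
are first integrals for all `i, j`. -/
theorem kharlamova_first_integrals (n : ℕ)
    (I : Fin n → ℝ) (In : ℝ) (hI : ∀ i, 0 < I i) (hIn : 0 < In)
    (B : Fin n → ℝ) (hB : ∀ i, B i ≠ 0)
    (Ω : Fin n → ℝ → ℝ) (Γ : Fin n → ℝ → ℝ) (Γn : ℝ → ℝ)
    (hΩ : ∀ i t, HasDerivAt (Ω i) (B i * Γn t / (I i + In)) t)
    (hΓ : ∀ i t, HasDerivAt (Γ i) (-(Γn t * Ω i t)) t)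
    (hΓn : ∀ t, HasDerivAt Γn (∑ i, Γ i t * Ω i t) t) :
    ∀ i j t, ((I i + In) / B i) * Ω i t - ((I j + In) / B j) * Ω j t
           = ((I i + In) / B i) * Ω i 0 - ((I j + In) / B j) * Ω j 0 :=
  kharlamova_first_integrals_general n I In hI hIn B hB Ω Γn hΩ
end

section
/- In the Kharlamova system, define new variables ω_1 = ((I_1+I_n)/B_1)Ω_{1n}, ω_i = ((I_i+I_n)/B_i)Ω_{in} − ((I_1+I_n)/B_1)Ω_{1n} for 2 ≤ i ≤ n-1, γ_1 = −((I_1+I_n)/B_1)Γ_1, γ_i = −((I_i+I_n)/B_i)Γ_i + ((I_1+I_n)/B_1)Γ_1 for 2 ≤ i ≤ n-1, and γ_n = Γ_n. Then along solutions: dω_1/dt = γ_n, dω_i/dt = 0 for i ≥ 2, dγ_i/dt = γ_n ω_i for i = 1,...,n-1, and dγ_n/dt = −(B_1/(I_1+I_n))² γ_1 ω_1 − Σ_{i=2}^{n-1} (B_i/(I_i+I_n))² (γ_1+γ_i)(ω_1+ω_i). -/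
/-! In the scaled variables `x_i = ((I_i+I_n)/B_i) Ω_{in}` and `y_i = -((I_i+I_n)/B_i) Γ_i`
the system becomes `ẋ_i = Γ_n`, `ẏ_i = Γ_n x_i`, `Γ̇_n = -Σ (B_i/(I_i+I_n))² y_i x_i`.
The new variables are `ω_1 = x_1`, `γ_1 = y_1` and the differences `ω_i = x_i - x_1`,
`γ_i = y_i - y_1`, so every claimed equation follows from these three by linearity. -/

theorem hasDerivAt_div_mul_of_hasDerivAt_mul_div {Ω : ℝ → ℝ} {b c g t : ℝ} (hb : b ≠ 0)
    (hc : c ≠ 0) (h : HasDerivAt Ω (b * g / c) t) :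
    HasDerivAt (fun s => c / b * Ω s) g t := by
  refine (h.const_mul (c / b)).congr_deriv ?_
  field_simp

theorem HasDerivAt.neg_const_mul_of_neg_mul {Γ : ℝ → ℝ} {g w t : ℝ} (k : ℝ)
    (h : HasDerivAt Γ (-(g * w)) t) :
    HasDerivAt (fun s => -(k * Γ s)) (g * (k * w)) t :=
  (h.const_mul k).fun_neg.congr_deriv (by ring)

theorem mul_eq_neg_div_sq_mul_of_scaled {a w b c y x : ℝ} (hb : b ≠ 0) (hc : c ≠ 0)
    (hy : y = -(c / b * a)) (hx : x = c / b * w) :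
    a * w = -((b / c) ^ 2 * y * x) := by
  subst hy hx
  field_simp

/-- In the Kharlamova system, the new variables
`ω_1 = ((I_1+I_n)/B_1)Ω_{1n}`, `ω_i = ((I_i+I_n)/B_i)Ω_{in} − ((I_1+I_n)/B_1)Ω_{1n}` (i ≥ 2),
`γ_1 = −((I_1+I_n)/B_1)Γ_1`, `γ_i = −((I_i+I_n)/B_i)Γ_i + ((I_1+I_n)/B_1)Γ_1` (i ≥ 2),
`γ_n = Γ_n` satisfy `ω̇_1 = γ_n`, `ω̇_i = 0` (i ≥ 2), `γ̇_i = γ_n ω_i`, and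
`γ̇_n = −(B_1/(I_1+I_n))² γ_1 ω_1 − Σ_{i≥2} (B_i/(I_i+I_n))² (γ_1+γ_i)(ω_1+ω_i)`. -/
theorem kharlamova_change_of_variables (m : ℕ)
    (I : Fin (m + 1) → ℝ) (In : ℝ) (hI : ∀ i, 0 < I i) (hIn : 0 < In)
    (B : Fin (m + 1) → ℝ) (hB : ∀ i, B i ≠ 0)
    (Ω : Fin (m + 1) → ℝ → ℝ) (Γ : Fin (m + 1) → ℝ → ℝ) (Γn : ℝ → ℝ)
    (hΩ : ∀ i t, HasDerivAt (Ω i) (B i * Γn t / (I i + In)) t)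
    (hΓ : ∀ i t, HasDerivAt (Γ i) (-(Γn t * Ω i t)) t)
    (hΓn : ∀ t, HasDerivAt Γn (∑ i, Γ i t * Ω i t) t)
    (ω γ : Fin (m + 1) → ℝ → ℝ)
    (hω0 : ∀ t, ω 0 t = ((I 0 + In) / B 0) * Ω 0 t)
    (hωi : ∀ i, i ≠ 0 → ∀ t,
      ω i t = ((I i + In) / B i) * Ω i t - ((I 0 + In) / B 0) * Ω 0 t)
    (hγ0 : ∀ t, γ 0 t = -(((I 0 + In) / B 0) * Γ 0 t))
    (hγi : ∀ i, i ≠ 0 → ∀ t,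
      γ i t = -(((I i + In) / B i) * Γ i t) + ((I 0 + In) / B 0) * Γ 0 t) :
    (∀ t, HasDerivAt (ω 0) (Γn t) t) ∧
    (∀ i, i ≠ 0 → ∀ t, HasDerivAt (ω i) 0 t) ∧
    (∀ i t, HasDerivAt (γ i) (Γn t * ω i t) t) ∧
    (∀ t, HasDerivAt Γn
      (-((B 0 / (I 0 + In)) ^ 2 * γ 0 t * ω 0 t)
        - ∑ i ∈ Finset.univ.erase 0,
            (B i / (I i + In)) ^ 2 * (γ 0 t + γ i t) * (ω 0 t + ω i t)) t) := by
  have hIIn : ∀ i, I i + In ≠ 0 := fun i => (add_pos (hI i) hIn).ne'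
  have hx : ∀ i t, HasDerivAt (fun s => (I i + In) / B i * Ω i s) (Γn t) t :=
    fun i t => hasDerivAt_div_mul_of_hasDerivAt_mul_div (hB i) (hIIn i) (hΩ i t)
  have hy : ∀ i t, HasDerivAt (fun s => -((I i + In) / B i * Γ i s))
      (Γn t * ((I i + In) / B i * Ω i t)) t :=
    fun i t => (hΓ i t).neg_const_mul_of_neg_mul _
  refine ⟨fun t => ?_, fun i hi t => ?_, fun i t => ?_, fun t => ?_⟩
  · rw [funext hω0]
    exact hx 0 t
  · rw [funext (hωi i hi), ← sub_self (Γn t)]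
    exact (hx i t).sub (hx 0 t)
  · rcases eq_or_ne i 0 with rfl | hi
    · rw [funext hγ0, hω0]
      exact hy 0 t
    · rw [funext (hγi i hi), hωi i hi]
      exact ((hy i t).fun_add ((hΓ 0 t).const_mul ((I 0 + In) / B 0))).congr_deriv
        (by ring)
  · refine (hΓn t).congr_deriv ?_
    rw [← Finset.add_sum_erase _ _ (Finset.mem_univ 0), sub_eq_add_neg,
      ← Finset.sum_neg_distrib]
    congr 1
    · exact mul_eq_neg_div_sq_mul_of_scaled (hB 0) (hIIn 0) (hγ0 t) (hω0 t)
    · refine Finset.sum_congr rfl fun i hmem => ?_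
      have hi := Finset.ne_of_mem_erase hmem
      refine mul_eq_neg_div_sq_mul_of_scaled (hB i) (hIIn i) ?_ ?_
      · rw [hγ0, hγi i hi]; ring
      · rw [hω0, hωi i hi]; ring
end

section
/- Along solutions of the transformed Kharlamova system, the quantity γ_n² equals P_4(ω_1), a polynomial of degree at most 4 in ω_1 with coefficients determined by initial conditions; explicitly γ_n² = 1 − (B_1/(I_1+I_n))²γ_1(ω_1)² − Σ_{i=2}^{n-1}(B_i/(I_i+I_n))²(γ_1(ω_1)+γ_i(ω_1))², where γ_1(ω_1) = γ_1⁰ + (ω_1² − (ω_1⁰)²)/2 and γ_i(ω_1) = γ_i⁰ + ω_i⁰(ω_1 − ω_1⁰). -/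
/-!
The system is explicitly integrable in terms of `ω_1`: since `ω_1' = γ_n`, every equation
`γ_i' = γ_n ω_i` reads `γ_i' = ω_i ω_1'`. For `i = 1` this integrates to
`γ_1 = γ_1⁰ + (ω_1² − (ω_1⁰)²)/2`; for `i ≥ 2` the `ω_i` are constant, so
`γ_i = γ_i⁰ + ω_i⁰ (ω_1 − ω_1⁰)`. Substituting into the constraint `⟨Γ,Γ⟩ = 1` gives `γ_n²`.
-/

theorem sub_eq_sub_of_hasDerivAt {𝕜 G : Type*} [RCLike 𝕜] [NormedAddCommGroup G]
    [NormedSpace 𝕜 G] {f g f' : 𝕜 → G}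
    (hf : ∀ x, HasDerivAt f (f' x) x) (hg : ∀ x, HasDerivAt g (f' x) x) (x y : 𝕜) :
    f x - f y = g x - g y := by
  have hfg : ∀ z, HasDerivAt (f - g) 0 z := fun z => by
    simpa using (hf z).sub (hg z)
  rw [sub_eq_sub_iff_sub_eq_sub]
  exact is_const_of_deriv_eq_zero (fun z => (hfg z).differentiableAt) (fun z => (hfg z).deriv) x y

theorem eq_add_sq_sub_sq_div_two_of_hasDerivAt {w v w' : ℝ → ℝ}
    (hw : ∀ t, HasDerivAt w (w' t) t) (hv : ∀ t, HasDerivAt v (w' t * w t) t) (t s : ℝ) :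
    v t = v s + (w t ^ 2 - w s ^ 2) / 2 := by
  have hsq : ∀ t, HasDerivAt (fun t => w t ^ 2 / 2) (w' t * w t) t := fun t => by
    refine (((hw t).pow 2).div_const 2).congr_deriv ?_
    ring
  linarith [sub_eq_sub_of_hasDerivAt hv hsq t s]

theorem eq_add_mul_sub_of_hasDerivAt {w v u w' : ℝ → ℝ}
    (hw : ∀ t, HasDerivAt w (w' t) t) (hv : ∀ t, HasDerivAt v (w' t * u t) t)
    (hu : ∀ t, HasDerivAt u 0 t) (t s : ℝ) :
    v t = v s + u s * (w t - w s) := by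
  have hu_const : ∀ t, u t = u s := fun t =>
    is_const_of_deriv_eq_zero (fun t => (hu t).differentiableAt) (fun t => (hu t).deriv) t s
  have hv' : ∀ t, HasDerivAt v (w' t * u s) t := fun t => hu_const t ▸ hv t
  have hmul : ∀ t, HasDerivAt (fun t => u s * w t) (w' t * u s) t := fun t => by
    simpa only [mul_comm] using (hw t).const_mul (u s)
  linarith [sub_eq_sub_of_hasDerivAt hv' hmul t s]

theorem kharlamova_quartic_general (m : ℕ)
    (I : Fin (m + 1) → ℝ) (In : ℝ)
    (B : Fin (m + 1) → ℝ)
    (ω γ : Fin (m + 1) → ℝ → ℝ) (γn : ℝ → ℝ)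
    (hω0 : ∀ t, HasDerivAt (ω 0) (γn t) t)
    (hωi : ∀ i, i ≠ 0 → ∀ t, HasDerivAt (ω i) 0 t)
    (hγ : ∀ i t, HasDerivAt (γ i) (γn t * ω i t) t)
    -- the constraint `⟨Γ,Γ⟩ = 1`, expressed in the new variables, holds along the flow:
    (hnorm : ∀ t, (γn t) ^ 2
      = 1 - (B 0 / (I 0 + In)) ^ 2 * (γ 0 t) ^ 2
          - ∑ i ∈ Finset.univ.erase 0,
              (B i / (I i + In)) ^ 2 * (γ 0 t + γ i t) ^ 2) :
    ∀ t, (γn t) ^ 2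
      = 1 - (B 0 / (I 0 + In)) ^ 2
              * (γ 0 0 + ((ω 0 t) ^ 2 - (ω 0 0) ^ 2) / 2) ^ 2
          - ∑ i ∈ Finset.univ.erase 0,
              (B i / (I i + In)) ^ 2
                * ((γ 0 0 + ((ω 0 t) ^ 2 - (ω 0 0) ^ 2) / 2)
                    + (γ i 0 + ω i 0 * (ω 0 t - ω 0 0))) ^ 2 := by
  intro t
  rw [hnorm t, eq_add_sq_sub_sq_div_two_of_hasDerivAt hω0 (hγ 0) t 0]
  congr 1
  refine Finset.sum_congr rfl fun i hi => ?_
  rw [eq_add_mul_sub_of_hasDerivAt hω0 (hγ i) (hωi i (Finset.ne_of_mem_erase hi)) t 0]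

/-- Along solutions of the transformed Kharlamova system, `γ_n²` equals a
polynomial of degree at most 4 in `ω_1` with coefficients determined by
the initial conditions:
`γ_n² = 1 − (B_1/(I_1+I_n))² γ_1(ω_1)² − Σ_{i≥2} (B_i/(I_i+I_n))² (γ_1(ω_1)+γ_i(ω_1))²`,
where `γ_1(ω_1) = γ_1⁰ + (ω_1² − (ω_1⁰)²)/2` and `γ_i(ω_1) = γ_i⁰ + ω_i⁰(ω_1 − ω_1⁰)`. -/
theorem kharlamova_quartic (m : ℕ)
    (I : Fin (m + 1) → ℝ) (In : ℝ) (hI : ∀ i, 0 < I i) (hIn : 0 < In)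
    (B : Fin (m + 1) → ℝ) (hB : ∀ i, B i ≠ 0)
    (ω γ : Fin (m + 1) → ℝ → ℝ) (γn : ℝ → ℝ)
    (hω0 : ∀ t, HasDerivAt (ω 0) (γn t) t)
    (hωi : ∀ i, i ≠ 0 → ∀ t, HasDerivAt (ω i) 0 t)
    (hγ : ∀ i t, HasDerivAt (γ i) (γn t * ω i t) t)
    -- the constraint `⟨Γ,Γ⟩ = 1`, expressed in the new variables, holds along the flow:
    (hnorm : ∀ t, (γn t) ^ 2
      = 1 - (B 0 / (I 0 + In)) ^ 2 * (γ 0 t) ^ 2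
          - ∑ i ∈ Finset.univ.erase 0,
              (B i / (I i + In)) ^ 2 * (γ 0 t + γ i t) ^ 2) :
    ∀ t, (γn t) ^ 2
      = 1 - (B 0 / (I 0 + In)) ^ 2
              * (γ 0 0 + ((ω 0 t) ^ 2 - (ω 0 0) ^ 2) / 2) ^ 2
          - ∑ i ∈ Finset.univ.erase 0,
              (B i / (I i + In)) ^ 2
                * ((γ 0 0 + ((ω 0 t) ^ 2 - (ω 0 0) ^ 2) / 2)
                    + (γ i 0 + ω i 0 * (ω 0 t - ω 0 0))) ^ 2 :=
  kharlamova_quartic_general m I In B ω γ γn hω0 hωi hγ hnorm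
end

section
/- For the multidimensional Klebsh–Tisserand system with potential V(Γ) = (1/2)Σ_{i=1}^n B_i Γ_i², the functions F_i(Ω,Γ) = (B_i − B_n)Γ_i² + (I_i+I_n)Ω_{in}² are first integrals for i = 1,...,n-1. -/
/-! Along a solution, `d/dt F_i = 2 (B_i − B_n) Γ_i (−Γ_n Ω_{in}) + 2 Ω_{in} (B_i − B_n) Γ_i Γ_n = 0`,
so `F_i` is constant by the mean value theorem. -/

theorem hasDerivAt_weighted_sq_add_sq_eq_zero {k c : ℝ} (hc : c ≠ 0) {x y u : ℝ → ℝ} {t : ℝ}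
    (hx : HasDerivAt x (k * y t * u t / c) t) (hy : HasDerivAt y (-(u t * x t)) t) :
    HasDerivAt (fun s => k * y s ^ 2 + c * x s ^ 2) 0 t :=
  (((hy.fun_pow 2).const_mul k).fun_add ((hx.fun_pow 2).const_mul c)).congr_deriv <| by
    field_simp
    ring

theorem weighted_sq_add_sq_eq_of_hasDerivAt {k c : ℝ} (hc : c ≠ 0) {x y u : ℝ → ℝ}
    (hx : ∀ t, HasDerivAt x (k * y t * u t / c) t) (hy : ∀ t, HasDerivAt y (-(u t * x t)) t)
    (t s : ℝ) : k * y t ^ 2 + c * x t ^ 2 = k * y s ^ 2 + c * x s ^ 2 :=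
  have hF t := hasDerivAt_weighted_sq_add_sq_eq_zero hc (hx t) (hy t)
  is_const_of_deriv_eq_zero (fun t => (hF t).differentiableAt) (fun t => (hF t).deriv) t s

theorem klebsh_tisserand_first_integrals_general (n : ℕ)
    (I : Fin n → ℝ) (In : ℝ) (hI : ∀ i, 0 < I i) (hIn : 0 < In)
    (B : Fin n → ℝ) (Bn : ℝ)
    (Ω : Fin n → ℝ → ℝ) (Γ : Fin n → ℝ → ℝ) (Γn : ℝ → ℝ)
    (hΩ : ∀ i t, HasDerivAt (Ω i) ((B i - Bn) * Γ i t * Γn t / (I i + In)) t)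
    (hΓ : ∀ i t, HasDerivAt (Γ i) (-(Γn t * Ω i t)) t) :
    ∀ i t, (B i - Bn) * (Γ i t) ^ 2 + (I i + In) * (Ω i t) ^ 2
         = (B i - Bn) * (Γ i 0) ^ 2 + (I i + In) * (Ω i 0) ^ 2 :=
  fun i t => weighted_sq_add_sq_eq_of_hasDerivAt (add_pos (hI i) hIn).ne' (hΩ i) (hΓ i) t 0

/-- For the multidimensional Klebsh–Tisserand system
`(I_i+I_n) Ω̇_{in} = (B_i − B_n) Γ_i Γ_n`, `Γ̇_i = −Γ_n Ω_{in}`, `Γ̇_n = Σ Γ_i Ω_{in}`,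
the functions `F_i = (B_i − B_n) Γ_i² + (I_i+I_n) Ω_{in}²` are first integrals. -/
theorem klebsh_tisserand_first_integrals (n : ℕ)
    (I : Fin n → ℝ) (In : ℝ) (hI : ∀ i, 0 < I i) (hIn : 0 < In)
    (B : Fin n → ℝ) (Bn : ℝ)
    (Ω : Fin n → ℝ → ℝ) (Γ : Fin n → ℝ → ℝ) (Γn : ℝ → ℝ)
    (hΩ : ∀ i t, HasDerivAt (Ω i) ((B i - Bn) * Γ i t * Γn t / (I i + In)) t)
    (hΓ : ∀ i t, HasDerivAt (Γ i) (-(Γn t * Ω i t)) t)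
    (hΓn : ∀ t, HasDerivAt Γn (∑ i, Γ i t * Ω i t) t) :
    ∀ i t, (B i - Bn) * (Γ i t) ^ 2 + (I i + In) * (Ω i t) ^ 2
         = (B i - Bn) * (Γ i 0) ^ 2 + (I i + In) * (Ω i 0) ^ 2 :=
  klebsh_tisserand_first_integrals_general n I In hI hIn B Bn Ω Γ Γn hΩ hΓ
end

section
/- Suppose B_i > B_n for all i ≤ n-1 and positive constants c_1,...,c_{n-1} satisfy Σ_{i=1}^{n-1} c_i/(B_i − B_n) < 1. Then on the level set T_c = {F_i = c_i, i = 1,...,n-1} ∩ {ΣΓ_j² = 1}, one has Γ_n ≠ 0 everywhere, and T_c is the disjoint union of two sets each diffeomorphic to the (n-1)-torus S¹_{c_1} × ... × S¹_{c_{n-1}} (corresponding to Γ_n > 0 and Γ_n < 0). -/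
/-- Suppose `B_i > B_n` and positive constants `c_i` satisfy `Σ c_i/(B_i−B_n) < 1`.
Then on the level set `T_c = {F_i = c_i} ∩ {⟨Γ,Γ⟩ = 1}` one has `Γ_n ≠ 0`, and
`T_c` is the disjoint union of the two sets `{Γ_n > 0}` and `{Γ_n < 0}`, each
homeomorphic to the (n-1)-torus `S¹_{c_1} × … × S¹_{c_{n-1}}` (product of the
ellipses `F_i = c_i`). -/
theorem klebsh_tisserand_invariant_tori (n : ℕ)
    (I : Fin n → ℝ) (In : ℝ) (hI : ∀ i, 0 < I i) (hIn : 0 < In)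
    (B : Fin n → ℝ) (Bn : ℝ) (hB : ∀ i, Bn < B i)
    (c : Fin n → ℝ) (hc : ∀ i, 0 < c i)
    (hsum : ∑ i, c i / (B i - Bn) < 1)
    (Tc P N : Set ((Fin n → ℝ) × (Fin n → ℝ) × ℝ))
    (hTc : Tc = {p | (∀ i, (B i - Bn) * (p.2.1 i) ^ 2 + (I i + In) * (p.1 i) ^ 2 = c i)
      ∧ (∑ j, (p.2.1 j) ^ 2) + p.2.2 ^ 2 = 1})
    (hP : P = {p ∈ Tc | 0 < p.2.2}) (hN : N = {p ∈ Tc | p.2.2 < 0})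
    (S : Set (Fin n → ℝ × ℝ))
    (hS : S = {z | ∀ i, (B i - Bn) * ((z i).2) ^ 2 + (I i + In) * ((z i).1) ^ 2 = c i}) :
    (∀ p ∈ Tc, p.2.2 ≠ 0) ∧
    Tc = P ∪ N ∧ Disjoint P N ∧
    Nonempty (P ≃ₜ S) ∧ Nonempty (N ≃ₜ S) := by
  have hBpos : ∀ i, 0 < B i - Bn := fun i => sub_pos.2 (hB i)
  have key : ∀ Γ : Fin n → ℝ, (∀ i, (B i - Bn) * (Γ i) ^ 2 ≤ c i) →
      ∑ j, (Γ j) ^ 2 < 1 := by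
    intro Γ h
    refine lt_of_le_of_lt (Finset.sum_le_sum fun j _ => ?_) hsum
    exact (le_div_iff₀ (hBpos j)).2 (by nlinarith [h j])
  -- bound for points of Tc
  have keyT : ∀ p : (Fin n → ℝ) × (Fin n → ℝ) × ℝ, p ∈ Tc → ∑ j, (p.2.1 j) ^ 2 < 1 := by
    intro p hp
    rw [hTc] at hp
    refine key _ fun i => ?_
    have h1 := hp.1 i
    have h2 : 0 ≤ (I i + In) * (p.1 i) ^ 2 :=
      mul_nonneg (by linarith [hI i]) (sq_nonneg _)
    linarith
  have hne : ∀ p ∈ Tc, p.2.2 ≠ 0 := by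
    intro p hp hz
    have h1 := keyT p hp
    rw [hTc] at hp
    have h2 := hp.2
    rw [hz] at h2
    simp at h2
    linarith
  -- bound for points of S
  have keyS : ∀ z : Fin n → ℝ × ℝ, z ∈ S → ∑ j, ((z j).2) ^ 2 < 1 := by
    intro z hz
    rw [hS] at hz
    refine key _ fun i => ?_
    have h1 := hz i
    have h2 : 0 ≤ (I i + In) * ((z i).1) ^ 2 :=
      mul_nonneg (by linarith [hI i]) (sq_nonneg _)
    linarith
  refine ⟨hne, ?_, ?_, ⟨?_⟩, ⟨?_⟩⟩
  · rw [hP, hN]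
    ext p
    constructor
    · intro hp
      rcases lt_trichotomy p.2.2 0 with h | h | h
      · exact Or.inr ⟨hp, h⟩
      · exact absurd h (hne p hp)
      · exact Or.inl ⟨hp, h⟩
    · rintro (⟨hp, _⟩ | ⟨hp, _⟩) <;> exact hp
  · rw [hP, hN, Set.disjoint_left]
    rintro p ⟨_, h1⟩ ⟨_, h2⟩
    linarith
  · -- P ≃ₜ S
    refine Homeomorph.mk (Equiv.mk
      (fun p => ⟨fun i => ((p : (Fin n → ℝ) × (Fin n → ℝ) × ℝ).1 i, (p : (Fin n → ℝ) × (Fin n → ℝ) × ℝ).2.1 i), ?_⟩)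
      (fun z => ⟨(fun i => ((z : Fin n → ℝ × ℝ) i).1, fun i => ((z : Fin n → ℝ × ℝ) i).2,
        Real.sqrt (1 - ∑ j, (((z : Fin n → ℝ × ℝ) j).2) ^ 2)), ?_⟩) ?_ ?_) ?_ ?_
    · obtain ⟨p, hp⟩ := p
      rw [hP] at hp
      rw [hS]
      have := hp.1
      rw [hTc] at this
      exact this.1
    · obtain ⟨z, hz⟩ := z
      have hlt := keyS z hz
      rw [hS] at hz
      rw [hP]
      have hpos : (0 : ℝ) < 1 - ∑ j, ((z j).2) ^ 2 := by linarith
      refine ⟨?_, Real.sqrt_pos.2 hpos⟩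
      rw [hTc]
      refine ⟨fun i => hz i, ?_⟩
      simp only
      rw [Real.sq_sqrt hpos.le]
      ring
    · rintro ⟨⟨Ω, Γ, γ⟩, hp⟩
      rw [hP] at hp
      obtain ⟨hmem, hγ⟩ := hp
      rw [hTc] at hmem
      have hsum1 := hmem.2
      simp only at hsum1 ⊢
      ext
      · rfl
      · rfl
      · simp only
        have : (1 : ℝ) - ∑ j, (Γ j) ^ 2 = γ ^ 2 := by
          linarith
        rw [this, Real.sqrt_sq hγ.le]
    · rintro ⟨z, hz⟩
      ext i <;> rfl
    · refine Continuous.subtype_mk ?_ _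
      refine continuous_pi fun i => Continuous.prodMk ?_ ?_
      · exact (continuous_apply i).comp (continuous_fst.comp continuous_subtype_val)
      · exact (continuous_apply i).comp (continuous_fst.comp (continuous_snd.comp continuous_subtype_val))
    · refine Continuous.subtype_mk ?_ _
      refine Continuous.prodMk ?_ (Continuous.prodMk ?_ ?_)
      · exact continuous_pi fun i => continuous_fst.comp ((continuous_apply i).comp continuous_subtype_val)
      · exact continuous_pi fun i => continuous_snd.comp ((continuous_apply i).comp continuous_subtype_val)
      · refine Real.continuous_sqrt.comp (Continuous.sub continuous_const ?_)
        exact continuous_finset_sum _ fun j _ =>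
          ((continuous_snd.comp ((continuous_apply j).comp continuous_subtype_val)).pow 2)
  · -- N ≃ₜ S
    refine Homeomorph.mk (Equiv.mk
      (fun p => ⟨fun i => ((p : (Fin n → ℝ) × (Fin n → ℝ) × ℝ).1 i, (p : (Fin n → ℝ) × (Fin n → ℝ) × ℝ).2.1 i), ?_⟩)
      (fun z => ⟨(fun i => ((z : Fin n → ℝ × ℝ) i).1, fun i => ((z : Fin n → ℝ × ℝ) i).2,
        -Real.sqrt (1 - ∑ j, (((z : Fin n → ℝ × ℝ) j).2) ^ 2)), ?_⟩) ?_ ?_) ?_ ?_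
    · obtain ⟨p, hp⟩ := p
      rw [hN] at hp
      rw [hS]
      have := hp.1
      rw [hTc] at this
      exact this.1
    · obtain ⟨z, hz⟩ := z
      have hlt := keyS z hz
      rw [hS] at hz
      rw [hN]
      have hpos : (0 : ℝ) < 1 - ∑ j, ((z j).2) ^ 2 := by linarith
      refine ⟨?_, neg_neg_iff_pos.mpr (Real.sqrt_pos.2 hpos)⟩
      rw [hTc]
      refine ⟨fun i => hz i, ?_⟩
      simp only
      rw [neg_sq, Real.sq_sqrt hpos.le]
      ring
    · rintro ⟨⟨Ω, Γ, γ⟩, hp⟩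
      rw [hN] at hp
      obtain ⟨hmem, hγ⟩ := hp
      rw [hTc] at hmem
      have hsum1 := hmem.2
      simp only at hsum1 ⊢
      ext
      · rfl
      · rfl
      · simp only
        have : (1 : ℝ) - ∑ j, (Γ j) ^ 2 = γ ^ 2 := by
          linarith
        rw [this, Real.sqrt_sq_eq_abs, abs_of_neg hγ, neg_neg]
    · rintro ⟨z, hz⟩
      ext i <;> rfl
    · refine Continuous.subtype_mk ?_ _
      refine continuous_pi fun i => Continuous.prodMk ?_ ?_
      · exact (continuous_apply i).comp (continuous_fst.comp continuous_subtype_val)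
      · exact (continuous_apply i).comp (continuous_fst.comp (continuous_snd.comp continuous_subtype_val))
    · refine Continuous.subtype_mk ?_ _
      refine Continuous.prodMk ?_ (Continuous.prodMk ?_ ?_)
      · exact continuous_pi fun i => continuous_fst.comp ((continuous_apply i).comp continuous_subtype_val)
      · exact continuous_pi fun i => continuous_snd.comp ((continuous_apply i).comp continuous_subtype_val)
      · refine (Real.continuous_sqrt.comp (Continuous.sub continuous_const ?_)).neg
        exact continuous_finset_sum _ fun j _ =>
          ((continuous_snd.comp ((continuous_apply j).comp continuous_subtype_val)).pow 2)
end

section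
/- Let solutions of the Klebsh–Tisserand system with B_i > B_n lie on a torus T_c with Γ_n > 0, and parametrize Ω_{in} = √(c_i/(I_i+I_n)) sin φ_i, Γ_i = √(c_i/(B_i−B_n)) cos φ_i. Then in the rescaled time τ with dτ = Γ_n dt, the angles evolve linearly: dφ_i/dτ = ω_i = √((B_i−B_n)/(I_i+I_n)) for i = 1,...,n-1. -/
open Real

/-- On an invariant torus of the Klebsh–Tisserand system with `Γ_n > 0`, with the
parametrization `Ω_{in} = √(c_i/(I_i+I_n)) sin φ_i`, `Γ_i = √(c_i/(B_i−B_n)) cos φ_i`,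
the angles evolve linearly in the rescaled time `τ` with `dτ = Γ_n dt`:
`dφ_i/dτ = ω_i = √((B_i−B_n)/(I_i+I_n))`. -/
theorem klebsh_tisserand_linear_flow_rescaled_time (n : ℕ)
    (I : Fin n → ℝ) (In : ℝ) (hI : ∀ i, 0 < I i) (hIn : 0 < In)
    (B : Fin n → ℝ) (Bn : ℝ) (hB : ∀ i, Bn < B i)
    (c : Fin n → ℝ) (hc : ∀ i, 0 < c i)
    (Ω : Fin n → ℝ → ℝ) (Γ : Fin n → ℝ → ℝ) (Γn : ℝ → ℝ)
    (hΩ : ∀ i t, HasDerivAt (Ω i) ((B i - Bn) * Γ i t * Γn t / (I i + In)) t)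
    (hΓ : ∀ i t, HasDerivAt (Γ i) (-(Γn t * Ω i t)) t)
    (hΓnpos : ∀ t, 0 < Γn t) (hΓncont : Continuous Γn)
    (φ : Fin n → ℝ → ℝ) (hφdiff : ∀ i, Differentiable ℝ (φ i))
    (hparamΩ : ∀ i t, Ω i t = Real.sqrt (c i / (I i + In)) * Real.sin (φ i t))
    (hparamΓ : ∀ i t, Γ i t = Real.sqrt (c i / (B i - Bn)) * Real.cos (φ i t))
    -- the rescaled time `τ` with `dτ = Γ_n dt`:
    (τ : ℝ → ℝ) (hτ : ∀ t, HasDerivAt τ (Γn t) t) (hτbij : Function.Bijective τ)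
    -- the angles as functions of the new time `τ`: `φ_i = ψ_i ∘ τ`
    (ψ : Fin n → ℝ → ℝ) (hψdiff : ∀ i, Differentiable ℝ (ψ i))
    (hψ : ∀ i t, φ i t = ψ i (τ t)) :
    ∀ i t, HasDerivAt (ψ i) (Real.sqrt ((B i - Bn) / (I i + In))) (τ t) := by
  intro i t
  have hBi : 0 < B i - Bn := sub_pos.mpr (hB i)
  have hII : 0 < I i + In := add_pos (hI i) hIn
  set A : ℝ := Real.sqrt (c i / (I i + In)) with hAdef
  set C : ℝ := Real.sqrt (c i / (B i - Bn)) with hCdef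
  set ω : ℝ := Real.sqrt ((B i - Bn) / (I i + In)) with hωdef
  have hA0 : 0 < A := Real.sqrt_pos.mpr (div_pos (hc i) hII)
  have hC0 : 0 < C := Real.sqrt_pos.mpr (div_pos (hc i) hBi)
  have hωsq : ω * ω = (B i - Bn) / (I i + In) :=
    Real.mul_self_sqrt (le_of_lt (div_pos hBi hII))
  have hA : A = ω * C := by
    rw [hωdef, hCdef, hAdef, ← Real.sqrt_mul (le_of_lt (div_pos hBi hII))]
    congr 1
    field_simp
  -- derivative of φ i at t
  set d : ℝ := deriv (φ i) t with hddef
  have hd : HasDerivAt (φ i) d t := ((hφdiff i) t).hasDerivAt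
  -- derivative of Ω via parametrization
  have hΩfun : Ω i = fun s => A * Real.sin (φ i s) := funext (hparamΩ i)
  have hΓfun : Γ i = fun s => C * Real.cos (φ i s) := funext (hparamΓ i)
  have h1 : HasDerivAt (fun s => A * Real.sin (φ i s)) (A * (Real.cos (φ i t) * d)) t :=
    (hd.sin).const_mul A
  have h2 : HasDerivAt (fun s => C * Real.cos (φ i s)) (C * (-Real.sin (φ i t) * d)) t :=
    (hd.cos).const_mul C
  have eq1 : (B i - Bn) * Γ i t * Γn t / (I i + In) = A * (Real.cos (φ i t) * d) := by
    have := hΩ i t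
    rw [hΩfun] at this
    exact this.unique h1
  have eq2 : -(Γn t * Ω i t) = C * (-Real.sin (φ i t) * d) := by
    have := hΓ i t
    rw [hΓfun] at this
    exact this.unique h2
  rw [hparamΓ i t, ← hCdef] at eq1
  rw [hparamΩ i t, ← hAdef] at eq2
  -- cos equation
  have hcos : Real.cos (φ i t) * d = Real.cos (φ i t) * (ω * Γn t) := by
    have h1' : A * (Real.cos (φ i t) * d) = A * (Real.cos (φ i t) * (ω * Γn t)) := by
      rw [← eq1, hA]
      linear_combination (-(C * Real.cos (φ i t) * Γn t)) * hωsq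
    exact mul_left_cancel₀ (ne_of_gt hA0) h1'
  have hsin : Real.sin (φ i t) * d = Real.sin (φ i t) * (ω * Γn t) := by
    have h2' : C * (Real.sin (φ i t) * d) = C * (Real.sin (φ i t) * (ω * Γn t)) := by
      linear_combination eq2 + (Γn t * Real.sin (φ i t)) * hA
    exact mul_left_cancel₀ (ne_of_gt hC0) h2'
  have hs := Real.sin_sq_add_cos_sq (φ i t)
  have key : d = ω * Γn t := by
    linear_combination Real.sin (φ i t) * hsin + Real.cos (φ i t) * hcos -
      (d - ω * Γn t) * hs
  -- chain rule
  have hcomp : HasDerivAt (fun s => ψ i (τ s)) (deriv (ψ i) (τ t) * Γn t) t :=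
    (((hψdiff i) (τ t)).hasDerivAt).comp t (hτ t)
  have hφeq : φ i = fun s => ψ i (τ s) := funext (hψ i)
  have huniq : d = deriv (ψ i) (τ t) * Γn t := by
    rw [hφeq] at hd
    exact hd.unique hcomp
  have hderiv : deriv (ψ i) (τ t) = ω :=
    mul_right_cancel₀ (ne_of_gt (hΓnpos t)) (by rw [← huniq, key])
  have := ((hψdiff i) (τ t)).hasDerivAt
  rwa [hderiv] at this
end

section
/- For the three-dimensional Suslov problem with J = diag(J_1, J_2, J_3), constraint Ω_3 = 0, and potential V(Γ) = v_1(Γ_1, Γ_2²+Γ_3²) + v_2(Γ_2, Γ_1²+Γ_3²), the function F = (1/2)(J_1²Ω_1² + J_2²Ω_2²) + J_2 v_1(Γ_1, Γ_2²+Γ_3²) + J_1 v_2(Γ_2, Γ_1²+Γ_3²) is a first integral. -/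
/-! Along a solution, `d/dt ½(J₁²Ω₁² + J₂²Ω₂²) = J₁Ω₁(Γ × ∇V)₁ + J₂Ω₂(Γ × ∇V)₂`. Since `v₁`
sees `Γ₂, Γ₃` only through `Γ₂² + Γ₃²` and `v₂` sees `Γ₁, Γ₃` only through `Γ₁² + Γ₃²`, the
chain rule shows that this is exactly minus the derivative of `J₂v₁ + J₁v₂`. So `F` has zero
derivative and is constant. -/

theorem DifferentiableAt.hasDerivAt_comp_prodMk {F : Type*} [NormedAddCommGroup F]
    [NormedSpace ℝ F] {v : ℝ × ℝ → F} {x y : ℝ → ℝ} {x' y' t : ℝ}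
    (hv : DifferentiableAt ℝ v (x t, y t)) (hx : HasDerivAt x x' t) (hy : HasDerivAt y y' t) :
    HasDerivAt (fun s => v (x s, y s))
      (x' • fderiv ℝ v (x t, y t) (1, 0) + y' • fderiv ℝ v (x t, y t) (0, 1)) t := by
  refine (hv.hasFDerivAt.comp_hasDerivAt t (hx.prodMk hy)).congr_deriv ?_
  have hxy : ((x', y') : ℝ × ℝ) = x' • ((1 : ℝ), (0 : ℝ)) + y' • ((0 : ℝ), (1 : ℝ)) := by
    simp
  rw [hxy, map_add, map_smul, map_smul]

noncomputable def suslovIntegral (J1 J2 : ℝ) (v1 v2 : ℝ × ℝ → ℝ) (Ω1 Ω2 Γ1 Γ2 Γ3 : ℝ → ℝ)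
    (t : ℝ) : ℝ :=
  (1 / 2) * (J1 ^ 2 * (Ω1 t) ^ 2 + J2 ^ 2 * (Ω2 t) ^ 2)
    + J2 * v1 (Γ1 t, (Γ2 t) ^ 2 + (Γ3 t) ^ 2)
    + J1 * v2 (Γ2 t, (Γ1 t) ^ 2 + (Γ3 t) ^ 2)

theorem hasDerivAt_suslovIntegral_zero {J1 J2 : ℝ} (hJ1 : J1 ≠ 0) (hJ2 : J2 ≠ 0)
    {v1 v2 : ℝ × ℝ → ℝ} {Ω1 Ω2 Γ1 Γ2 Γ3 : ℝ → ℝ} {t g1 g2 g3 : ℝ}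
    (hv1 : DifferentiableAt ℝ v1 (Γ1 t, (Γ2 t) ^ 2 + (Γ3 t) ^ 2))
    (hv2 : DifferentiableAt ℝ v2 (Γ2 t, (Γ1 t) ^ 2 + (Γ3 t) ^ 2))
    (hg1 : g1 = fderiv ℝ v1 (Γ1 t, (Γ2 t) ^ 2 + (Γ3 t) ^ 2) (1, 0)
      + fderiv ℝ v2 (Γ2 t, (Γ1 t) ^ 2 + (Γ3 t) ^ 2) (0, 1) * (2 * Γ1 t))
    (hg2 : g2 = fderiv ℝ v1 (Γ1 t, (Γ2 t) ^ 2 + (Γ3 t) ^ 2) (0, 1) * (2 * Γ2 t)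
      + fderiv ℝ v2 (Γ2 t, (Γ1 t) ^ 2 + (Γ3 t) ^ 2) (1, 0))
    (hg3 : g3 = (fderiv ℝ v1 (Γ1 t, (Γ2 t) ^ 2 + (Γ3 t) ^ 2) (0, 1)
      + fderiv ℝ v2 (Γ2 t, (Γ1 t) ^ 2 + (Γ3 t) ^ 2) (0, 1)) * (2 * Γ3 t))
    (hΩ1 : HasDerivAt Ω1 ((Γ2 t * g3 - Γ3 t * g2) / J1) t)
    (hΩ2 : HasDerivAt Ω2 ((Γ3 t * g1 - Γ1 t * g3) / J2) t)
    (hΓ1 : HasDerivAt Γ1 (-(Γ3 t * Ω2 t)) t)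
    (hΓ2 : HasDerivAt Γ2 (Γ3 t * Ω1 t) t)
    (hΓ3 : HasDerivAt Γ3 (Γ1 t * Ω2 t - Γ2 t * Ω1 t) t) :
    HasDerivAt (suslovIntegral J1 J2 v1 v2 Ω1 Ω2 Γ1 Γ2 Γ3) 0 t := by
  have hM1 : HasDerivAt (fun s => J1 * Ω1 s) (Γ2 t * g3 - Γ3 t * g2) t :=
    (hΩ1.const_mul J1).congr_deriv (mul_div_cancel₀ _ hJ1)
  have hM2 : HasDerivAt (fun s => J2 * Ω2 s) (Γ3 t * g1 - Γ1 t * g3) t :=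
    (hΩ2.const_mul J2).congr_deriv (mul_div_cancel₀ _ hJ2)
  have hkinetic := ((hM1.fun_pow 2).fun_add (hM2.fun_pow 2)).const_mul (1 / 2)
  simp only [mul_pow] at hkinetic
  have hpot1 := hv1.hasDerivAt_comp_prodMk hΓ1 ((hΓ2.fun_pow 2).fun_add (hΓ3.fun_pow 2))
  have hpot2 := hv2.hasDerivAt_comp_prodMk hΓ2 ((hΓ1.fun_pow 2).fun_add (hΓ3.fun_pow 2))
  refine ((hkinetic.add (hpot1.const_mul J2)).add (hpot2.const_mul J1)).congr_deriv ?_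
  simp only [smul_eq_mul, hg1, hg2, hg3]
  ring

theorem suslov_3d_general_potential_integral_general
    (J1 J2 : ℝ) (hJ1 : 0 < J1) (hJ2 : 0 < J2)
    (v1 v2 : ℝ × ℝ → ℝ) (hv1 : Differentiable ℝ v1) (hv2 : Differentiable ℝ v2)
    (Ω1 Ω2 Γ1 Γ2 Γ3 : ℝ → ℝ)
    -- gradient of `V(Γ) = v_1(Γ_1, Γ_2²+Γ_3²) + v_2(Γ_2, Γ_1²+Γ_3²)`:
    (g1 g2 g3 : ℝ → ℝ)
    (hg1 : ∀ t, g1 t = fderiv ℝ v1 (Γ1 t, (Γ2 t) ^ 2 + (Γ3 t) ^ 2) (1, 0)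
      + fderiv ℝ v2 (Γ2 t, (Γ1 t) ^ 2 + (Γ3 t) ^ 2) (0, 1) * (2 * Γ1 t))
    (hg2 : ∀ t, g2 t = fderiv ℝ v1 (Γ1 t, (Γ2 t) ^ 2 + (Γ3 t) ^ 2) (0, 1) * (2 * Γ2 t)
      + fderiv ℝ v2 (Γ2 t, (Γ1 t) ^ 2 + (Γ3 t) ^ 2) (1, 0))
    (hg3 : ∀ t, g3 t = (fderiv ℝ v1 (Γ1 t, (Γ2 t) ^ 2 + (Γ3 t) ^ 2) (0, 1)
      + fderiv ℝ v2 (Γ2 t, (Γ1 t) ^ 2 + (Γ3 t) ^ 2) (0, 1)) * (2 * Γ3 t))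
    -- the Suslov equations with constraint `Ω_3 = 0`:
    (hΩ1 : ∀ t, HasDerivAt Ω1 ((Γ2 t * g3 t - Γ3 t * g2 t) / J1) t)
    (hΩ2 : ∀ t, HasDerivAt Ω2 ((Γ3 t * g1 t - Γ1 t * g3 t) / J2) t)
    (hΓ1 : ∀ t, HasDerivAt Γ1 (-(Γ3 t * Ω2 t)) t)
    (hΓ2 : ∀ t, HasDerivAt Γ2 (Γ3 t * Ω1 t) t)
    (hΓ3 : ∀ t, HasDerivAt Γ3 (Γ1 t * Ω2 t - Γ2 t * Ω1 t) t) :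
    ∀ t, (1 / 2) * (J1 ^ 2 * (Ω1 t) ^ 2 + J2 ^ 2 * (Ω2 t) ^ 2)
        + J2 * v1 (Γ1 t, (Γ2 t) ^ 2 + (Γ3 t) ^ 2)
        + J1 * v2 (Γ2 t, (Γ1 t) ^ 2 + (Γ3 t) ^ 2)
      = (1 / 2) * (J1 ^ 2 * (Ω1 0) ^ 2 + J2 ^ 2 * (Ω2 0) ^ 2)
        + J2 * v1 (Γ1 0, (Γ2 0) ^ 2 + (Γ3 0) ^ 2)
        + J1 * v2 (Γ2 0, (Γ1 0) ^ 2 + (Γ3 0) ^ 2) := by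
  have hF (t : ℝ) : HasDerivAt (suslovIntegral J1 J2 v1 v2 Ω1 Ω2 Γ1 Γ2 Γ3) 0 t :=
    hasDerivAt_suslovIntegral_zero hJ1.ne' hJ2.ne' (hv1 _) (hv2 _) (hg1 t) (hg2 t) (hg3 t)
      (hΩ1 t) (hΩ2 t) (hΓ1 t) (hΓ2 t) (hΓ3 t)
  exact fun t => is_const_of_deriv_eq_zero (fun s => (hF s).differentiableAt)
    (fun s => (hF s).deriv) t 0

/-- For the 3D Suslov problem with `J = diag(J_1,J_2,J_3)`, constraint `Ω_3 = 0`,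
and potential `V(Γ) = v_1(Γ_1, Γ_2²+Γ_3²) + v_2(Γ_2, Γ_1²+Γ_3²)`, the function
`F = ½(J_1²Ω_1² + J_2²Ω_2²) + J_2 v_1(Γ_1,Γ_2²+Γ_3²) + J_1 v_2(Γ_2,Γ_1²+Γ_3²)`
is a first integral. -/
theorem suslov_3d_general_potential_integral
    (J1 J2 J3 : ℝ) (hJ1 : 0 < J1) (hJ2 : 0 < J2) (hJ3 : 0 < J3)
    (v1 v2 : ℝ × ℝ → ℝ) (hv1 : Differentiable ℝ v1) (hv2 : Differentiable ℝ v2)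
    (Ω1 Ω2 Γ1 Γ2 Γ3 : ℝ → ℝ)
    -- gradient of `V(Γ) = v_1(Γ_1, Γ_2²+Γ_3²) + v_2(Γ_2, Γ_1²+Γ_3²)`:
    (g1 g2 g3 : ℝ → ℝ)
    (hg1 : ∀ t, g1 t = fderiv ℝ v1 (Γ1 t, (Γ2 t) ^ 2 + (Γ3 t) ^ 2) (1, 0)
      + fderiv ℝ v2 (Γ2 t, (Γ1 t) ^ 2 + (Γ3 t) ^ 2) (0, 1) * (2 * Γ1 t))
    (hg2 : ∀ t, g2 t = fderiv ℝ v1 (Γ1 t, (Γ2 t) ^ 2 + (Γ3 t) ^ 2) (0, 1) * (2 * Γ2 t)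
      + fderiv ℝ v2 (Γ2 t, (Γ1 t) ^ 2 + (Γ3 t) ^ 2) (1, 0))
    (hg3 : ∀ t, g3 t = (fderiv ℝ v1 (Γ1 t, (Γ2 t) ^ 2 + (Γ3 t) ^ 2) (0, 1)
      + fderiv ℝ v2 (Γ2 t, (Γ1 t) ^ 2 + (Γ3 t) ^ 2) (0, 1)) * (2 * Γ3 t))
    -- the Suslov equations with constraint `Ω_3 = 0`:
    (hΩ1 : ∀ t, HasDerivAt Ω1 ((Γ2 t * g3 t - Γ3 t * g2 t) / J1) t)
    (hΩ2 : ∀ t, HasDerivAt Ω2 ((Γ3 t * g1 t - Γ1 t * g3 t) / J2) t)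
    (hΓ1 : ∀ t, HasDerivAt Γ1 (-(Γ3 t * Ω2 t)) t)
    (hΓ2 : ∀ t, HasDerivAt Γ2 (Γ3 t * Ω1 t) t)
    (hΓ3 : ∀ t, HasDerivAt Γ3 (Γ1 t * Ω2 t - Γ2 t * Ω1 t) t) :
    ∀ t, (1 / 2) * (J1 ^ 2 * (Ω1 t) ^ 2 + J2 ^ 2 * (Ω2 t) ^ 2)
        + J2 * v1 (Γ1 t, (Γ2 t) ^ 2 + (Γ3 t) ^ 2)
        + J1 * v2 (Γ2 t, (Γ1 t) ^ 2 + (Γ3 t) ^ 2)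
      = (1 / 2) * (J1 ^ 2 * (Ω1 0) ^ 2 + J2 ^ 2 * (Ω2 0) ^ 2)
        + J2 * v1 (Γ1 0, (Γ2 0) ^ 2 + (Γ3 0) ^ 2)
        + J1 * v2 (Γ2 0, (Γ1 0) ^ 2 + (Γ3 0) ^ 2) :=
  suslov_3d_general_potential_integral_general J1 J2 hJ1 hJ2 v1 v2 hv1 hv2 Ω1 Ω2 Γ1 Γ2 Γ3 g1 g2 g3
    hg1 hg2 hg3 hΩ1 hΩ2 hΓ1 hΓ2 hΓ3
end

section
/- For the three-dimensional Klebsh–Tisserand case with J = diag(J_1,J_2,J_3), constraint Ω_3 = 0 and potential V(Γ) = (ε/2)⟨JΓ,Γ⟩ = (ε/2)(J_1Γ_1² + J_2Γ_2² + J_3Γ_3²), the function F = (1/2)(J_1²Ω_1² + J_2²Ω_2²) − (1/2)(A_1Γ_1² + A_2Γ_2² + A_3Γ_3²), with A = ε J^{-1} det J (i.e., A_i = ε det(J)/J_i), is a first integral. -/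
/-!
Once `A_i = ε det J / J_i` is simplified to `ε J_j J_k` (this needs `J_i ≠ 0`), the derivative of `F`
along the flow is a polynomial in `Ω₁, Ω₂, Γ₁, Γ₂, Γ₃`: the kinetic part contributes
`ε Γ₃ (J₁(J₃ - J₂) Ω₁Γ₂ + J₂(J₁ - J₃) Ω₂Γ₁)` and the potential part cancels it term by term.
-/

noncomputable def klebshTisserandIntegral (J1 J2 J3 ε ω1 ω2 γ1 γ2 γ3 : ℝ) : ℝ :=
  (1 / 2) * (J1 ^ 2 * ω1 ^ 2 + J2 ^ 2 * ω2 ^ 2)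
    - (1 / 2) * ((ε * (J1 * J2 * J3) / J1) * γ1 ^ 2
        + (ε * (J1 * J2 * J3) / J2) * γ2 ^ 2
        + (ε * (J1 * J2 * J3) / J3) * γ3 ^ 2)

theorem hasDerivAt_klebshTisserandIntegral {J1 J2 J3 ε : ℝ} {Ω1 Ω2 Γ1 Γ2 Γ3 : ℝ → ℝ}
    {ω1' ω2' γ1' γ2' γ3' t : ℝ} (hΩ1 : HasDerivAt Ω1 ω1' t) (hΩ2 : HasDerivAt Ω2 ω2' t)
    (hΓ1 : HasDerivAt Γ1 γ1' t) (hΓ2 : HasDerivAt Γ2 γ2' t) (hΓ3 : HasDerivAt Γ3 γ3' t) :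
    HasDerivAt (fun s => klebshTisserandIntegral J1 J2 J3 ε (Ω1 s) (Ω2 s) (Γ1 s) (Γ2 s) (Γ3 s))
      (J1 ^ 2 * Ω1 t * ω1' + J2 ^ 2 * Ω2 t * ω2'
        - ((ε * (J1 * J2 * J3) / J1) * Γ1 t * γ1' + (ε * (J1 * J2 * J3) / J2) * Γ2 t * γ2'
          + (ε * (J1 * J2 * J3) / J3) * Γ3 t * γ3')) t := by
  have h := ((((hΩ1.pow 2).const_mul (J1 ^ 2)).add ((hΩ2.pow 2).const_mul (J2 ^ 2))).const_mul
      (1 / 2)).sub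
    (((((hΓ1.pow 2).const_mul (ε * (J1 * J2 * J3) / J1)).add
      ((hΓ2.pow 2).const_mul (ε * (J1 * J2 * J3) / J2))).add
      ((hΓ3.pow 2).const_mul (ε * (J1 * J2 * J3) / J3))).const_mul (1 / 2))
  exact h.congr_deriv (by norm_num; ring)

theorem klebshTisserand_lieDeriv_eq_zero {J1 J2 J3 : ℝ} (hJ1 : J1 ≠ 0) (hJ2 : J2 ≠ 0)
    (hJ3 : J3 ≠ 0) (ε ω1 ω2 γ1 γ2 γ3 : ℝ) :
    J1 ^ 2 * ω1 * (ε * (J3 - J2) * γ2 * γ3 / J1) + J2 ^ 2 * ω2 * (ε * (J1 - J3) * γ1 * γ3 / J2)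
      - ((ε * (J1 * J2 * J3) / J1) * γ1 * -(γ3 * ω2) + (ε * (J1 * J2 * J3) / J2) * γ2 * (γ3 * ω1)
        + (ε * (J1 * J2 * J3) / J3) * γ3 * (γ1 * ω2 - γ2 * ω1)) = 0 := by
  field_simp
  ring

/-- For the 3D Klebsh–Tisserand case with `J = diag(J_1,J_2,J_3)`, constraint
`Ω_3 = 0` and potential `V(Γ) = (ε/2)⟨JΓ,Γ⟩`, the function
`F = ½(J_1²Ω_1² + J_2²Ω_2²) − ½(A_1Γ_1² + A_2Γ_2² + A_3Γ_3²)` with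
`A_i = ε det(J)/J_i` is a first integral. -/
theorem suslov_3d_klebsh_tisserand_integral
    (J1 J2 J3 ε : ℝ) (hJ1 : 0 < J1) (hJ2 : 0 < J2) (hJ3 : 0 < J3)
    (Ω1 Ω2 Γ1 Γ2 Γ3 : ℝ → ℝ)
    (hΩ1 : ∀ t, HasDerivAt Ω1 (ε * (J3 - J2) * Γ2 t * Γ3 t / J1) t)
    (hΩ2 : ∀ t, HasDerivAt Ω2 (ε * (J1 - J3) * Γ1 t * Γ3 t / J2) t)
    (hΓ1 : ∀ t, HasDerivAt Γ1 (-(Γ3 t * Ω2 t)) t)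
    (hΓ2 : ∀ t, HasDerivAt Γ2 (Γ3 t * Ω1 t) t)
    (hΓ3 : ∀ t, HasDerivAt Γ3 (Γ1 t * Ω2 t - Γ2 t * Ω1 t) t) :
    ∀ t, (1 / 2) * (J1 ^ 2 * (Ω1 t) ^ 2 + J2 ^ 2 * (Ω2 t) ^ 2)
        - (1 / 2) * ((ε * (J1 * J2 * J3) / J1) * (Γ1 t) ^ 2
            + (ε * (J1 * J2 * J3) / J2) * (Γ2 t) ^ 2
            + (ε * (J1 * J2 * J3) / J3) * (Γ3 t) ^ 2)
      = (1 / 2) * (J1 ^ 2 * (Ω1 0) ^ 2 + J2 ^ 2 * (Ω2 0) ^ 2)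
        - (1 / 2) * ((ε * (J1 * J2 * J3) / J1) * (Γ1 0) ^ 2
            + (ε * (J1 * J2 * J3) / J2) * (Γ2 0) ^ 2
            + (ε * (J1 * J2 * J3) / J3) * (Γ3 0) ^ 2) := by
  have hF : ∀ s, HasDerivAt
      (fun s => klebshTisserandIntegral J1 J2 J3 ε (Ω1 s) (Ω2 s) (Γ1 s) (Γ2 s) (Γ3 s)) 0 s :=
    fun s => (hasDerivAt_klebshTisserandIntegral (hΩ1 s) (hΩ2 s) (hΓ1 s) (hΓ2 s)
      (hΓ3 s)).congr_deriv (klebshTisserand_lieDeriv_eq_zero hJ1.ne' hJ2.ne' hJ3.ne' ..)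
  intro t
  exact is_const_of_deriv_eq_zero (fun s => (hF s).differentiableAt) (fun s => (hF s).deriv) t 0
end

section
/- Under the parametrization Ω_{in} = √(c_i/(I_i+I_n)) sin φ_i, Γ_i = √(c_i/(B_i−B_n)) cos φ_i (i ≤ n-1), the original-time Klebsh–Tisserand dynamics on an invariant torus with Γ_n > 0 takes the form dφ_i/dt = ω_i · Γ_n(φ_1,...,φ_{n-1}), where ω_i = √((B_i−B_n)/(I_i+I_n)) and Γ_n(φ) = √(1 − Σ_i (c_i/(B_i−B_n))cos²φ_i); i.e., the system has the form (dφ_i/dt = ω_i/Φ(φ)) with common positive factor Φ = Γ_n^{-1}. -/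
/-- Under the parametrization `Ω_{in} = √(c_i/(I_i+I_n)) sin φ_i`,
`Γ_i = √(c_i/(B_i−B_n)) cos φ_i`, the original-time Klebsh–Tisserand dynamics on an
invariant torus with `Γ_n > 0` takes the form
`dφ_i/dt = ω_i · Γ_n(φ)` with `ω_i = √((B_i−B_n)/(I_i+I_n))` and
`Γ_n(φ) = √(1 − Σ_j (c_j/(B_j−B_n)) cos²φ_j)`; i.e. the system has the form
`dφ_i/dt = ω_i / Φ(φ)` with the common positive factor `Φ = Γ_n^{-1}`. -/
theorem klebsh_tisserand_quasiperiodic_form (n : ℕ)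
    (I : Fin n → ℝ) (In : ℝ) (hI : ∀ i, 0 < I i) (hIn : 0 < In)
    (B : Fin n → ℝ) (Bn : ℝ) (hB : ∀ i, Bn < B i)
    (c : Fin n → ℝ) (hc : ∀ i, 0 < c i)
    (hsum : ∑ i, c i / (B i - Bn) < 1)
    (Ω : Fin n → ℝ → ℝ) (Γ : Fin n → ℝ → ℝ) (Γn : ℝ → ℝ)
    (hΩ : ∀ i t, HasDerivAt (Ω i) ((B i - Bn) * Γ i t * Γn t / (I i + In)) t)
    (hΓ : ∀ i t, HasDerivAt (Γ i) (-(Γn t * Ω i t)) t)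
    (hΓnpos : ∀ t, 0 < Γn t)
    (hsphere : ∀ t, (∑ j, (Γ j t) ^ 2) + (Γn t) ^ 2 = 1)
    (φ : Fin n → ℝ → ℝ) (hφdiff : ∀ i, Differentiable ℝ (φ i))
    (hparamΩ : ∀ i t, Ω i t = Real.sqrt (c i / (I i + In)) * Real.sin (φ i t))
    (hparamΓ : ∀ i t, Γ i t = Real.sqrt (c i / (B i - Bn)) * Real.cos (φ i t)) :
    ∀ i t, HasDerivAt (φ i)
      (Real.sqrt ((B i - Bn) / (I i + In)) *
        Real.sqrt (1 - ∑ j, (c j / (B j - Bn)) * (Real.cos (φ j t)) ^ 2)) t := by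

  intro i t
  have hBpos : 0 < B i - Bn := sub_pos.2 (hB i)
  have hIpos : 0 < I i + In := by have := hI i; linarith
  set a := Real.sqrt (c i / (B i - Bn)) with ha
  set b := Real.sqrt (c i / (I i + In)) with hb
  set ω := Real.sqrt ((B i - Bn) / (I i + In)) with hω
  have hci := hc i
  have hapos : 0 < a := Real.sqrt_pos.2 (by positivity)
  have hbpos : 0 < b := Real.sqrt_pos.2 (by positivity)
  have hba : b = ω * a := by
    rw [hω, ha, hb, ← Real.sqrt_mul (by positivity)]
    congr 1
    field_simp
  have hω2 : ω * ω = (B i - Bn) / (I i + In) := Real.mul_self_sqrt (by positivity)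
  have hK : (B i - Bn) * a / (I i + In) = ω * b := by
    rw [hba, ← mul_assoc, hω2]; ring
  -- Γn t equals the sqrt expression
  have hΓn : Γn t = Real.sqrt (1 - ∑ j, (c j / (B j - Bn)) * (Real.cos (φ j t)) ^ 2) := by
    have hsq : ∑ j, (Γ j t) ^ 2 = ∑ j, (c j / (B j - Bn)) * (Real.cos (φ j t)) ^ 2 :=
      Finset.sum_congr rfl fun j _ => by
        rw [hparamΓ j t, mul_pow,
          Real.sq_sqrt (le_of_lt (div_pos (hc j) (sub_pos.2 (hB j))))]
    have h1 : (Γn t) ^ 2 = 1 - ∑ j, (c j / (B j - Bn)) * (Real.cos (φ j t)) ^ 2 := by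
      have := hsphere t
      rw [hsq] at this
      linarith
    rw [← h1, Real.sqrt_sq (hΓnpos t).le]
  have hd : HasDerivAt (φ i) (deriv (φ i) t) t := (hφdiff i t).hasDerivAt
  set d := deriv (φ i) t with hdd
  -- derivative of Γ i via the parametrization
  have hΓeq : Γ i = fun s => a * Real.cos (φ i s) := funext fun s => hparamΓ i s
  have hΩeq : Ω i = fun s => b * Real.sin (φ i s) := funext fun s => hparamΩ i s
  have hΓd : HasDerivAt (Γ i) (a * (-Real.sin (φ i t) * d)) t := by
    rw [hΓeq]
    exact ((Real.hasDerivAt_cos (φ i t)).comp t hd).const_mul a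
  have hΩd : HasDerivAt (Ω i) (b * (Real.cos (φ i t) * d)) t := by
    rw [hΩeq]
    exact ((Real.hasDerivAt_sin (φ i t)).comp t hd).const_mul b
  have E1 : -(Γn t * Ω i t) = a * (-Real.sin (φ i t) * d) := (hΓ i t).unique hΓd
  have E2 : (B i - Bn) * Γ i t * Γn t / (I i + In) = b * (Real.cos (φ i t) * d) :=
    (hΩ i t).unique hΩd
  rw [hparamΩ i t, ← hb, hba] at E1
  rw [hparamΓ i t, ← ha] at E2
  have hs1 : Real.sin (φ i t) * (d - ω * Γn t) = 0 := by
    have h0 : a * (Real.sin (φ i t) * (d - ω * Γn t)) = 0 := by linear_combination E1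
    exact (mul_eq_zero.1 h0).resolve_left hapos.ne'
  have hc1 : Real.cos (φ i t) * (d - ω * Γn t) = 0 := by
    have h0 : b * (Real.cos (φ i t) * (d - ω * Γn t)) = 0 := by
      linear_combination -E2 + Real.cos (φ i t) * Γn t * hK
    exact (mul_eq_zero.1 h0).resolve_left hbpos.ne'
  have hpy := Real.sin_sq_add_cos_sq (φ i t)
  have hfin : d = ω * Γn t := by
    linear_combination Real.sin (φ i t) * hs1 + Real.cos (φ i t) * hc1 -
      (d - ω * Γn t) * hpy
  have : ω * Real.sqrt (1 - ∑ j, (c j / (B j - Bn)) * (Real.cos (φ j t)) ^ 2) = d := by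
    rw [← hΓn, hfin]
  exact this ▸ hd
end
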